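/- Every bipartite graph G with Δ(G) ≥ 4 satisfies θ_int(G) ≤ ⌈Δ(G)/3⌉; moreover G can be decomposed into ⌈Δ(G)/3⌉ interval colorable subgraphs such that at each vertex the numbers of incident edges in any two subgraphs differ by at most one. -/

import Mathlib

open SimpleGraph

variable {V : Type*}

/-- A proper edge coloring: distinct edges sharing a vertex get distinct colors. -/
def IsProperEdgeColoring (G : SimpleGraph V) (c : Sym2 V → ℕ) : Prop :=
  ∀ e₁ ∈ G.edgeSet, ∀ e₂ ∈ G.edgeSet, e₁ ≠ e₂ → (∃ v, v ∈ e₁ ∧ v ∈ e₂) → c e₁ ≠ c e₂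

/-- The set of colors appearing on edges incident to `v`. -/
def colorsAt (G : SimpleGraph V) (c : Sym2 V → ℕ) (v : V) : Set ℕ :=
  {n | ∃ e ∈ G.edgeSet, v ∈ e ∧ c e = n}

/-- An interval coloring: a proper edge coloring with positive integer colors such that
the set of colors at each vertex is an interval of integers. -/
def IsIntervalColoring (G : SimpleGraph V) (c : Sym2 V → ℕ) : Prop :=
  IsProperEdgeColoring G c ∧ (∀ e ∈ G.edgeSet, 1 ≤ c e) ∧
    ∀ v, ∀ a ∈ colorsAt G c v, ∀ b ∈ colorsAt G c v, ∀ k, a ≤ k → k ≤ b →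
      k ∈ colorsAt G c v

def IntervalColorable (G : SimpleGraph V) : Prop :=
  ∃ c, IsIntervalColoring G c

/-- The chromatic index: least `t` admitting a proper edge coloring with colors in `{1,…,t}`. -/
noncomputable def chromIndex (G : SimpleGraph V) : ℕ :=
  sInf {t | ∃ c, IsProperEdgeColoring G c ∧ ∀ e ∈ G.edgeSet, c e ∈ Finset.Icc 1 t}

/-- A decomposition of `G` into `k` edge-disjoint interval colorable subgraphs. -/
def IntervalDecomposition (G : SimpleGraph V) (k : ℕ) : Prop :=
  ∃ H : Fin k → SimpleGraph V, (∀ i, H i ≤ G) ∧ (∀ i, IntervalColorable (H i)) ∧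
    ∀ e ∈ G.edgeSet, ∃! i, e ∈ (H i).edgeSet

/-- The interval coloring thickness of `G`. -/
noncomputable def intervalThickness (G : SimpleGraph V) : ℕ :=
  sInf {k | IntervalDecomposition G k}


/-!
Let `k = ⌈Δ / 3⌉`. Splitting every vertex into blocks of `k` incident edges and coloring the
split graph with `k` colors by König's theorem gives an equitable coloring of `G`: every color
appears `⌊d / k⌋` or `⌈d / k⌉ ≤ 3` times at a vertex of degree `d`. Each color class is then a
bipartite graph of maximum degree `3`, which is interval colorable by Hansen's theorem: remove a
matching `M` leaving maximum degree `2`, color the paths and cycles left with `2, 3` (together with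
the edges of `M` joining two path ends) and give every edge of `M` the color `1` or `4`.
-/

variable {G : SimpleGraph V} {c : Sym2 V → ℕ}

theorem isProperEdgeColoring_iff_injOn :
    IsProperEdgeColoring G c ↔ ∀ v, Set.InjOn c (G.incidenceSet v) := by
  constructor
  · intro hc v e he f hf hef
    by_contra hne
    exact hc e he.1 f hf.1 hne ⟨v, he.2, hf.2⟩ hef
  · rintro hc e he f hf hne ⟨v, hve, hvf⟩ hef
    exact hne (hc v ⟨he, hve⟩ ⟨hf, hvf⟩ hef)

theorem IsProperEdgeColoring.injOn (hc : IsProperEdgeColoring G c) (v : V) :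
    Set.InjOn c (G.incidenceSet v) :=
  isProperEdgeColoring_iff_injOn.1 hc v

theorem colorsAt_eq_image (G : SimpleGraph V) (c : Sym2 V → ℕ) (v : V) :
    colorsAt G c v = c '' G.incidenceSet v := by
  ext n
  simp [colorsAt, incidenceSet, and_assoc]

theorem isIntervalColoring_iff :
    IsIntervalColoring G c ↔ IsProperEdgeColoring G c ∧ (∀ e ∈ G.edgeSet, 1 ≤ c e) ∧
      ∀ v, (colorsAt G c v).OrdConnected := by
  simp only [IsIntervalColoring, Set.ordConnected_def, Set.subset_def, Set.mem_Icc]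
  grind

namespace SimpleGraph

theorem incidenceSet_deleteEdges (G : SimpleGraph V) (s : Set (Sym2 V)) (v : V) :
    (G.deleteEdges s).incidenceSet v = G.incidenceSet v \ s := by
  ext e
  simp [incidenceSet, edgeSet_deleteEdges, and_right_comm]

theorem reachable_of_mem_edgeSet {e : Sym2 V} (he : e ∈ G.edgeSet) {x y : V} (hx : x ∈ e)
    (hy : y ∈ e) : G.Reachable x y := by
  obtain rfl | hxy := eq_or_ne x y
  · rfl
  · rw [(Sym2.mem_and_mem_iff hxy).1 ⟨hx, hy⟩] at he
    exact Adj.reachable he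

theorem Colorable.odd_length_of_adj (hG : G.Colorable 2) {u v : V} (huv : G.Adj u v)
    (p : G.Walk u v) : Odd p.length := by
  obtain ⟨C⟩ := hG
  let C' : G.Coloring Bool := recolorOfEquiv G finTwoEquiv C
  rw [C'.odd_length_iff_not_congr p]
  have := C'.valid huv
  cases h : C' u <;> cases h' : C' v <;> simp_all

def colorSubgraph (G : SimpleGraph V) (c : Sym2 V → ℕ) (s : Set ℕ) : SimpleGraph V :=
  G.deleteEdges {e | c e ∉ s}

variable {s : Set ℕ}

@[simp] theorem colorSubgraph_adj {x y : V} :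
    (G.colorSubgraph c s).Adj x y ↔ G.Adj x y ∧ c s(x, y) ∈ s := by
  simp [colorSubgraph]

@[simp] theorem mem_edgeSet_colorSubgraph {e : Sym2 V} :
    e ∈ (G.colorSubgraph c s).edgeSet ↔ e ∈ G.edgeSet ∧ c e ∈ s := by
  simp [colorSubgraph, edgeSet_deleteEdges]

@[simp] theorem mem_incidenceSet_colorSubgraph {e : Sym2 V} {v : V} :
    e ∈ (G.colorSubgraph c s).incidenceSet v ↔ e ∈ G.incidenceSet v ∧ c e ∈ s := by
  simp [colorSubgraph, incidenceSet_deleteEdges]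

theorem colorSubgraph_le : G.colorSubgraph c s ≤ G := deleteEdges_le _

end SimpleGraph

theorem exists_mem_Icc_notMem_colorsAt {v : V} {k : ℕ} (hfin : (G.incidenceSet v).Finite)
    (hlt : (G.incidenceSet v).ncard < k) : ∃ a ∈ Set.Icc 1 k, a ∉ colorsAt G c v := by
  rw [colorsAt_eq_image]
  refine Set.exists_mem_notMem_of_ncard_lt_ncard ?_ (hfin.image c)
  calc (c '' G.incidenceSet v).ncard ≤ (G.incidenceSet v).ncard := Set.ncard_image_le hfin
    _ < k := hlt
    _ = (Set.Icc 1 k).ncard := by simp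

theorem IsProperEdgeColoring.update_deleteEdges [DecidableEq V] {e : Sym2 V} {a : ℕ}
    (hc : IsProperEdgeColoring (G.deleteEdges {e}) c)
    (ha : ∀ w ∈ e, a ∉ colorsAt (G.deleteEdges {e}) c w) :
    IsProperEdgeColoring G (Function.update c e a) := by
  rw [isProperEdgeColoring_iff_injOn]
  intro w
  have hsub : G.incidenceSet w ⊆ insert e ((G.deleteEdges {e}).incidenceSet w) := by
    intro f hf
    rw [incidenceSet_deleteEdges]
    by_cases hfe : f = e <;> simp_all
  have hnotin : e ∉ (G.deleteEdges {e}).incidenceSet w := by simp [incidenceSet_deleteEdges]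
  have hEqOn : Set.EqOn (Function.update c e a) c ((G.deleteEdges {e}).incidenceSet w) :=
    fun f hf => Function.update_of_ne (ne_of_mem_of_not_mem hf hnotin) _ _
  by_cases hw : w ∈ e
  · refine Set.InjOn.mono hsub ((Set.injOn_insert hnotin).2 ⟨(hc.injOn w).congr hEqOn.symm, ?_⟩)
    rw [Function.update_self, hEqOn.image_eq, ← colorsAt_eq_image]
    exact ha w hw
  · have : G.incidenceSet w = (G.deleteEdges {e}).incidenceSet w := by
      rw [incidenceSet_deleteEdges, Set.sdiff_singleton_eq_self fun he => hw he.2]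
    rw [this]
    exact (hc.injOn w).congr hEqOn.symm

open Classical in
noncomputable def swapColorsOn (c : Sym2 V → ℕ) (a b : ℕ) (F : Set (Sym2 V)) (e : Sym2 V) : ℕ :=
  if e ∈ F then Equiv.swap a b (c e) else c e

theorem swapColorsOn_mem {a b : ℕ} {F : Set (Sym2 V)} {e : Sym2 V} {s : Set ℕ} (ha : a ∈ s)
    (hb : b ∈ s) (he : c e ∈ s) : swapColorsOn c a b F e ∈ s := by
  unfold swapColorsOn
  split_ifs
  · rw [Equiv.swap_apply_def]
    split_ifs <;> assumption
  · exact he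

theorem isProperEdgeColoring_swapColorsOn {a b : ℕ} {F : Set (Sym2 V)}
    (hc : IsProperEdgeColoring G c)
    (hF : ∀ e ∈ F, ∀ f ∈ G.edgeSet, (∃ x, x ∈ e ∧ x ∈ f) → c f = a ∨ c f = b → f ∈ F) :
    IsProperEdgeColoring G (swapColorsOn c a b F) := by
  have mixed : ∀ e ∈ G.edgeSet, ∀ f ∈ G.edgeSet, e ≠ f → (∃ x, x ∈ e ∧ x ∈ f) → e ∈ F →
      f ∉ F → Equiv.swap a b (c e) ≠ c f := by
    intro e he f hf hne hef heF hfF hswap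
    by_cases hab : c f = a ∨ c f = b
    · exact hfF (hF e heF f hf hef hab)
    · push Not at hab
      rw [Equiv.swap_apply_eq_iff, Equiv.swap_apply_of_ne_of_ne hab.1 hab.2] at hswap
      exact hc e he f hf hne hef hswap
  intro e he f hf hne hef
  unfold swapColorsOn
  split_ifs with heF hfF hfF
  · exact (Equiv.swap a b).injective.ne (hc e he f hf hne hef)
  · exact mixed e he f hf hne hef heF hfF
  · exact (mixed f hf e he hne.symm (hef.imp fun _ => And.symm) hfF heF).symm
  · exact hc e he f hf hne hef

section Kempe

variable {a b : ℕ} {u v : V}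

theorem IsProperEdgeColoring.color_eq_iff_even_of_isPath (hc : IsProperEdgeColoring G c)
    (hu : a ∉ colorsAt G c u) {x y : V} (h : (G.colorSubgraph c {a, b}).Adj x y)
    (p : (G.colorSubgraph c {a, b}).Walk y u) (hp : (Walk.cons h p).IsPath) :
    c s(x, y) = b ↔ Even p.length := by
  induction p generalizing x with
  | nil =>
    have hab := (colorSubgraph_adj.1 h).2
    have hxa : c s(x, _) ≠ a := fun hxa =>
      hu ((colorsAt_eq_image G c _).symm ▸ ⟨_, (mk'_mem_incidenceSet_right_iff G).2
        (colorSubgraph_adj.1 h).1, hxa⟩)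
    simp only [Set.mem_insert_iff, Set.mem_singleton_iff] at hab
    simp only [Walk.length_nil, Even.zero, iff_true]
    omega
  | @cons y z w h' p ih =>
    have hne : s(x, y) ≠ s(y, z) := by
      have := hp.edges_nodup
      simp_all
    have hcne : c s(x, y) ≠ c s(y, z) :=
      hc.injOn y |>.ne ((mk'_mem_incidenceSet_right_iff G).2 (colorSubgraph_adj.1 h).1)
        ((mk'_mem_incidenceSet_left_iff G).2 (colorSubgraph_adj.1 h').1) hne
    have hxy := (colorSubgraph_adj.1 h).2
    have hyz := (colorSubgraph_adj.1 h').2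
    simp only [Set.mem_insert_iff, Set.mem_singleton_iff] at hxy hyz
    rw [Walk.length_cons, Nat.even_add_one, ← ih hu h' hp.of_cons]
    omega

theorem IsProperEdgeColoring.not_reachable_colorSubgraph (hc : IsProperEdgeColoring G c)
    (hodd : ∀ p : G.Walk u v, Odd p.length) (ha : a ∉ colorsAt G c u)
    (hb : b ∉ colorsAt G c v) : ¬ (G.colorSubgraph c {a, b}).Reachable v u := by
  classical
  rintro ⟨q⟩
  obtain ⟨p, hp⟩ := q.toPath
  cases p with
  | nil => exact Nat.not_odd_zero (hodd Walk.nil)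
  | cons h p =>
    have hlen := hodd ((Walk.cons h p).reverse.mapLe colorSubgraph_le)
    rw [Walk.length_mapLe, Walk.length_reverse, Walk.length_cons, Nat.odd_add_one,
      Nat.not_odd_iff_even, ← hc.color_eq_iff_even_of_isPath ha h p hp] at hlen
    rw [colorsAt_eq_image] at hb
    exact hb ⟨_, (mk'_mem_incidenceSet_left_iff G).2 (colorSubgraph_adj.1 h).1, hlen⟩

/-- Kempe chain: `F` is the component of `u` in the `{a, b}`-subgraph. A path in it from `v`
to `u` would alternate in color and end with `b` at `v`, as it has odd length. -/
theorem IsProperEdgeColoring.exists_swapColorsOn (hc : IsProperEdgeColoring G c)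
    (hodd : ∀ p : G.Walk u v, Odd p.length) (ha : a ∉ colorsAt G c u)
    (hb : b ∉ colorsAt G c v) :
    ∃ F, IsProperEdgeColoring G (swapColorsOn c a b F) ∧
      b ∉ colorsAt G (swapColorsOn c a b F) u ∧ b ∉ colorsAt G (swapColorsOn c a b F) v := by
  set K := G.colorSubgraph c {a, b}
  set F : Set (Sym2 V) := {e | e ∈ K.edgeSet ∧ ∃ x ∈ e, K.Reachable u x}
  have hvF : ∀ e ∈ G.incidenceSet v, e ∉ F := fun e he ⟨heK, x, hx, hux⟩ =>
    hc.not_reachable_colorSubgraph hodd ha hb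
      (hux.trans (reachable_of_mem_edgeSet heK hx he.2)).symm
  refine ⟨F, isProperEdgeColoring_swapColorsOn hc ?_, ?_, ?_⟩
  · rintro e ⟨heK, x, hx, hux⟩ f hf ⟨w, hwe, hwf⟩ hcf
    have hfK : f ∈ K.edgeSet := mem_edgeSet_colorSubgraph.2 ⟨hf, by simpa using hcf⟩
    exact ⟨hfK, w, hwf, hux.trans (reachable_of_mem_edgeSet heK hx hwe)⟩
  · rw [colorsAt_eq_image] at ha ⊢
    rintro ⟨e, he, heb⟩
    unfold swapColorsOn at heb
    split_ifs at heb with heF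
    · rw [Equiv.swap_apply_eq_iff, Equiv.swap_apply_right] at heb
      exact ha ⟨e, he, heb⟩
    · exact heF ⟨mem_edgeSet_colorSubgraph.2 ⟨he.1, by simp [heb]⟩, u, he.2, Reachable.rfl⟩
  · rw [colorsAt_eq_image] at hb ⊢
    rintro ⟨e, he, heb⟩
    unfold swapColorsOn at heb
    rw [if_neg (hvF e he)] at heb
    exact hb ⟨e, he, heb⟩

end Kempe

theorem exists_isProperEdgeColoring_Icc_of_deleteEdges {k : ℕ} {u v : V} {a b : ℕ}
    (hG : G.Colorable 2) (he : s(u, v) ∈ G.edgeSet)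
    (hc : IsProperEdgeColoring (G.deleteEdges {s(u, v)}) c)
    (hcmaps : Set.MapsTo c (G.deleteEdges {s(u, v)}).edgeSet (Set.Icc 1 k))
    (ha : a ∈ Set.Icc 1 k) (hau : a ∉ colorsAt (G.deleteEdges {s(u, v)}) c u)
    (hb : b ∈ Set.Icc 1 k) (hbv : b ∉ colorsAt (G.deleteEdges {s(u, v)}) c v) :
    ∃ c', IsProperEdgeColoring G c' ∧ Set.MapsTo c' G.edgeSet (Set.Icc 1 k) := by
  classical
  have hodd (p : (G.deleteEdges {s(u, v)}).Walk u v) : Odd p.length :=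
    Walk.length_mapLe (deleteEdges_le _) p ▸ hG.odd_length_of_adj he _
  obtain ⟨F, hF, hbu', hbv'⟩ := hc.exists_swapColorsOn hodd hau hbv
  refine ⟨Function.update (swapColorsOn c a b F) s(u, v) b,
    hF.update_deleteEdges fun w hw => ?_, fun f hf => ?_⟩
  · rcases Sym2.mem_iff.1 hw with rfl | rfl <;> assumption
  · by_cases hfe : f = s(u, v)
    · rw [hfe, Function.update_self]
      exact hb
    · rw [Function.update_of_ne hfe]
      exact swapColorsOn_mem ha hb (hcmaps (by rw [edgeSet_deleteEdges]; exact ⟨hf, hfe⟩))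

/-- König's edge coloring theorem, by induction on the edges: to color `uv`, pick `a` missing
at `u` and `b` missing at `v` and free `b` at `u` along a Kempe chain. -/
theorem exists_isProperEdgeColoring_Icc {k : ℕ} (hG : G.Colorable 2) (hfin : G.edgeSet.Finite)
    (hdeg : ∀ v, (G.incidenceSet v).ncard ≤ k) :
    ∃ c, IsProperEdgeColoring G c ∧ Set.MapsTo c G.edgeSet (Set.Icc 1 k) := by
  induction hn : G.edgeSet.ncard generalizing G with
  | zero =>
    rw [Set.ncard_eq_zero hfin] at hn
    exact ⟨fun _ => 1, by simp [IsProperEdgeColoring, hn], hn ▸ Set.mapsTo_empty _ _⟩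
  | succ n ih =>
    obtain ⟨e, he⟩ := Set.nonempty_of_ncard_ne_zero (by rw [hn]; exact n.succ_ne_zero)
    induction e using Sym2.ind with | _ u v => ?_
    set G' := G.deleteEdges {s(u, v)}
    have hincfin (w : V) : (G.incidenceSet w).Finite := hfin.subset (G.incidenceSet_subset w)
    have hG'inc (w : V) : G'.incidenceSet w = G.incidenceSet w \ {s(u, v)} :=
      incidenceSet_deleteEdges G _ w
    obtain ⟨c, hc, hcmaps⟩ := ih (hG.mono_left (deleteEdges_le _))
      (hfin.subset (edgeSet_mono (deleteEdges_le _)))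
      (fun w => (Set.ncard_le_ncard (hG'inc w ▸ Set.sdiff_subset) (hincfin w)).trans (hdeg w))
      (by rw [edgeSet_deleteEdges, Set.ncard_sdiff_singleton_of_mem he]; omega)
    have hlt (w : V) (hw : w ∈ s(u, v)) : (G'.incidenceSet w).ncard < k := by
      have hwinc : s(u, v) ∈ G.incidenceSet w := ⟨he, hw⟩
      rw [hG'inc, Set.ncard_sdiff_singleton_of_mem hwinc]
      have := (Set.ncard_pos (hincfin w)).2 ⟨_, hwinc⟩
      have := hdeg w
      omega
    obtain ⟨a, ha, hau⟩ := exists_mem_Icc_notMem_colorsAt (c := c)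
      ((hincfin u).subset (hG'inc u ▸ Set.sdiff_subset)) (hlt u (Sym2.mem_mk_left u v))
    obtain ⟨b, hb, hbv⟩ := exists_mem_Icc_notMem_colorsAt (c := c)
      ((hincfin v).subset (hG'inc v ▸ Set.sdiff_subset)) (hlt v (Sym2.mem_mk_right u v))
    exact exists_isProperEdgeColoring_Icc_of_deleteEdges hG he hc hcmaps ha hau hb hbv

theorem Nat.div_eq_iff_mem_Ico {i j k : ℕ} (hk : 0 < k) :
    j / k = i ↔ j ∈ Set.Ico (i * k) (i * k + k) := by
  rw [Set.mem_Ico, ← Nat.le_div_iff_mul_le hk, ← add_one_mul, ← Nat.div_lt_iff_lt_mul hk]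
  omega

theorem Set.Finite.exists_blocks {α : Type*} {s : Set α} (hs : s.Finite) {k : ℕ} (hk : 0 < k) :
    ∃ f : α → ℕ, (∀ i, {x ∈ s | f x = i}.ncard ≤ k) ∧
      (∀ i < s.ncard / k, {x ∈ s | f x = i}.ncard = k) ∧
      ∀ x ∈ s, f x < (s.ncard + k - 1) / k := by
  obtain ⟨g, hg⟩ := hs.exists_bijOn_of_encard_eq (t := Set.Iio s.ncard)
    (by rw [← hs.cast_ncard_eq, ← (Set.finite_Iio _).cast_ncard_eq, Set.ncard_Iio_nat])
  have hblock (i : ℕ) :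
      {x ∈ s | g x / k = i}.ncard = (Set.Ico (i * k) (i * k + k) ∩ Set.Iio s.ncard).ncard := by
    rw [← (hg.injOn.mono (Set.sep_subset _ _)).ncard_image]
    congr 1
    ext j
    simp only [Set.mem_image, Set.mem_sep_iff, Set.mem_inter_iff, ← Nat.div_eq_iff_mem_Ico hk]
    constructor
    · rintro ⟨x, ⟨hx, rfl⟩, rfl⟩
      exact ⟨rfl, hg.mapsTo hx⟩
    · rintro ⟨hj, hjs⟩
      obtain ⟨x, hx, rfl⟩ := hg.surjOn hjs
      exact ⟨x, ⟨hx, hj⟩, rfl⟩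
  refine ⟨fun x => g x / k, fun i => ?_, fun i hi => ?_, fun x hx => ?_⟩
  · rw [hblock]
    exact (Set.ncard_le_ncard Set.inter_subset_left (Set.finite_Ico _ _)).trans (by simp)
  · have : i * k + k ≤ s.ncard := by
      rw [← add_one_mul]
      exact (Nat.le_div_iff_mul_le hk).1 hi
    rw [hblock, Set.inter_eq_left.2 (show Set.Ico (i * k) (i * k + k) ⊆ Set.Iio s.ncard from
      fun j hj => lt_of_lt_of_le hj.2 this)]
    simp
  · have hgx : g x < s.ncard := hg.mapsTo hx
    have := Nat.lt_div_mul_add (a := s.ncard + k - 1) hk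
    rw [Nat.div_lt_iff_lt_mul hk]
    omega

namespace SimpleGraph

def splitEdge (blk : V → Sym2 V → ℕ) : Sym2 V → Sym2 (V × ℕ) :=
  Sym2.lift ⟨fun x y => s((x, blk x s(x, y)), (y, blk y s(x, y))), fun x y => by
    dsimp only
    rw [Sym2.eq_swap (a := y)]
    exact Sym2.eq_swap⟩

variable {blk : V → Sym2 V → ℕ}

theorem mem_splitEdge {p : V × ℕ} {e : Sym2 V} :
    p ∈ splitEdge blk e ↔ p.1 ∈ e ∧ blk p.1 e = p.2 := by
  induction e using Sym2.ind with | _ x y => ?_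
  obtain ⟨v, i⟩ := p
  simp only [splitEdge, Sym2.lift_mk, Sym2.mem_iff, Prod.mk.injEq]
  grind

theorem map_fst_splitEdge (e : Sym2 V) : (splitEdge blk e).map Prod.fst = e := by
  induction e using Sym2.ind with | _ x y => rfl

theorem splitEdge_injective : Function.Injective (splitEdge blk) :=
  Function.LeftInverse.injective map_fst_splitEdge

/-- Vertex splitting: the copy `(v, i)` of `v` receives the edges `e` at `v` with
`blk v e = i`. -/
def splitGraph (G : SimpleGraph V) (blk : V → Sym2 V → ℕ) : SimpleGraph (V × ℕ) :=
  fromEdgeSet (splitEdge blk '' G.edgeSet)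

theorem edgeSet_splitGraph : (G.splitGraph blk).edgeSet = splitEdge blk '' G.edgeSet := by
  rw [splitGraph, edgeSet_fromEdgeSet, sdiff_eq_left, Set.disjoint_left]
  rintro _ ⟨e, he, rfl⟩ hdiag
  exact G.not_isDiag_of_mem_edgeSet he (map_fst_splitEdge (blk := blk) e ▸ hdiag.map)

theorem incidenceSet_splitGraph (v : V) (i : ℕ) :
    (G.splitGraph blk).incidenceSet (v, i) =
      splitEdge blk '' {e ∈ G.incidenceSet v | blk v e = i} := by
  ext f
  simp only [incidenceSet, edgeSet_splitGraph, Set.mem_sep_iff, Set.mem_image]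
  constructor
  · rintro ⟨⟨e, he, rfl⟩, hv⟩
    exact ⟨e, ⟨⟨he, (mem_splitEdge.1 hv).1⟩, (mem_splitEdge.1 hv).2⟩, rfl⟩
  · rintro ⟨e, ⟨⟨he, hve⟩, hi⟩, rfl⟩
    exact ⟨⟨e, he, rfl⟩, mem_splitEdge.2 ⟨hve, hi⟩⟩

theorem colorable_splitGraph {n : ℕ} (hG : G.Colorable n) : (G.splitGraph blk).Colorable n :=
  hG.of_hom
    { toFun := Prod.fst
      map_rel' := fun {p q} h => by
        obtain ⟨⟨e, he, hpq⟩, -⟩ := (fromEdgeSet_adj _).1 h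
        rwa [← map_fst_splitEdge (blk := blk) e, hpq] at he }

end SimpleGraph

/-- Split every vertex into blocks of `k` edges and color the split graph by König's theorem:
each color appears at most once in each block and exactly once in each full block. -/
theorem exists_equitable_edgeColoring {k : ℕ} (hG : G.Colorable 2) (hfin : G.edgeSet.Finite)
    (hk : 0 < k) :
    ∃ c : Sym2 V → ℕ, Set.MapsTo c G.edgeSet (Set.Icc 1 k) ∧ ∀ v, ∀ t ∈ Set.Icc 1 k,
      (G.incidenceSet v).ncard / k ≤ {e ∈ G.incidenceSet v | c e = t}.ncard ∧
      {e ∈ G.incidenceSet v | c e = t}.ncard ≤ ((G.incidenceSet v).ncard + k - 1) / k := by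
  have hincfin (v : V) : (G.incidenceSet v).Finite := hfin.subset (G.incidenceSet_subset v)
  choose blk hblk_le hblk_full hblk_lt using fun v => (hincfin v).exists_blocks hk
  obtain ⟨cH, hcH, hcHmaps⟩ := exists_isProperEdgeColoring_Icc (colorable_splitGraph hG)
    (edgeSet_splitGraph (blk := blk) ▸ hfin.image _) fun ⟨v, i⟩ => by
      rw [incidenceSet_splitGraph, splitEdge_injective.injOn.ncard_image]
      exact hblk_le v i
  have hmaps : Set.MapsTo (cH ∘ splitEdge blk) G.edgeSet (Set.Icc 1 k) :=
    fun e he => hcHmaps (edgeSet_splitGraph ▸ Set.mem_image_of_mem _ he)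
  have hinj (v : V) (i : ℕ) :
      Set.InjOn (cH ∘ splitEdge blk) {e ∈ G.incidenceSet v | blk v e = i} :=
    (hcH.injOn (v, i)).comp splitEdge_injective.injOn
      fun e he => (incidenceSet_splitGraph (G := G) v i).symm ▸ Set.mem_image_of_mem _ he
  refine ⟨cH ∘ splitEdge blk, hmaps, fun v t ht => ?_⟩
  set A := {e ∈ G.incidenceSet v | (cH ∘ splitEdge blk) e = t}
  have hAinj : Set.InjOn (blk v) A := fun e he f hf hef =>
    hinj v (blk v f) ⟨he.1, hef⟩ ⟨hf.1, rfl⟩ (he.2.trans hf.2.symm)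
  rw [← hAinj.ncard_image]
  constructor
  · rw [← Set.ncard_Iio_nat ((G.incidenceSet v).ncard / k)]
    refine Set.ncard_le_ncard (fun i hi => ?_)
      ((hincfin v).subset (Set.sep_subset _ _) |>.image _)
    set B := {e ∈ G.incidenceSet v | blk v e = i}
    have hBcol : (cH ∘ splitEdge blk) '' B = Set.Icc 1 k := by
      refine Set.eq_of_subset_of_ncard_le ?_ ?_ (Set.finite_Icc 1 k)
      · exact hmaps.mono_left (fun e he => he.1.1) |>.image_subset
      · rw [(hinj v i).ncard_image, hblk_full v i hi]
        simp
    obtain ⟨e, he, hte⟩ := hBcol ▸ ht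
    exact ⟨e, ⟨he.1, hte⟩, he.2⟩
  · rw [← Set.ncard_Iio_nat (((G.incidenceSet v).ncard + k - 1) / k)]
    exact Set.ncard_le_ncard (Set.image_subset_iff.2 fun e he => hblk_lt v e he.1)

theorem Set.OrdConnected.of_subset_Icc_one_four {S : Set ℕ} (hS : S ⊆ Set.Icc 1 4)
    (h14 : ¬(1 ∈ S ∧ 4 ∈ S)) (h13 : 1 ∈ S → 3 ∈ S → 2 ∈ S) (h24 : 2 ∈ S → 4 ∈ S → 3 ∈ S) :
    S.OrdConnected := by
  refine ⟨fun a ha b hb k ⟨hak, hkb⟩ => ?_⟩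
  obtain rfl | hak := eq_or_lt_of_le hak
  · exact ha
  obtain rfl | hkb := eq_or_lt_of_le hkb
  · exact hb
  have ha' := hS ha
  have hb' := hS hb
  simp only [Set.mem_Icc] at ha' hb'
  have : (a = 1 ∧ k = 2 ∧ (b = 3 ∨ b = 4)) ∨ (a = 2 ∧ k = 3 ∧ b = 4) ∨
      (a = 1 ∧ k = 3 ∧ b = 4) := by
    omega
  rcases this with ⟨rfl, rfl, rfl | rfl⟩ | ⟨rfl, rfl, rfl⟩ | ⟨rfl, rfl, rfl⟩
  exacts [h13 ha hb, (h14 ⟨ha, hb⟩).elim, h24 ha hb, (h14 ⟨ha, hb⟩).elim]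

variable {M : Set (Sym2 V)}

namespace SimpleGraph

/-- `G - M` together with the edges of `M` joining two ends of paths of `G - M`, i.e. two vertices
of degree at most one in `G - M`. -/
def joinPathEnds (G : SimpleGraph V) (M : Set (Sym2 V)) : SimpleGraph V :=
  G.deleteEdges {e ∈ M | ∃ x ∈ e, ¬((G.deleteEdges M).incidenceSet x).Subsingleton}

theorem joinPathEnds_le : G.joinPathEnds M ≤ G := deleteEdges_le _

theorem mem_edgeSet_joinPathEnds_of_notMem {e : Sym2 V} (he : e ∈ G.edgeSet) (heM : e ∉ M) :
    e ∈ (G.joinPathEnds M).edgeSet := by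
  rw [joinPathEnds, edgeSet_deleteEdges]
  exact ⟨he, fun h => heM h.1⟩

theorem mem_edgeSet_joinPathEnds_of_subsingleton {e : Sym2 V} (he : e ∈ G.edgeSet)
    (hends : ∀ x ∈ e, ((G.deleteEdges M).incidenceSet x).Subsingleton) :
    e ∈ (G.joinPathEnds M).edgeSet := by
  rw [joinPathEnds, edgeSet_deleteEdges]
  exact ⟨he, fun ⟨_, x, hx, hns⟩ => hns (hends x hx)⟩

theorem incidenceSet_deleteEdges_subset_joinPathEnds (v : V) :
    (G.deleteEdges M).incidenceSet v ⊆ (G.joinPathEnds M).incidenceSet v :=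
  fun _ he => ⟨edgeSet_mono (deleteEdges_anti fun _ h => h.1) he.1, he.2⟩

theorem ncard_incidenceSet_joinPathEnds_le_two (hfin : G.edgeSet.Finite)
    (hM : ∀ v, (M ∩ G.incidenceSet v).Subsingleton)
    (hD : ∀ v, ((G.deleteEdges M).incidenceSet v).ncard ≤ 2) (v : V) :
    ((G.joinPathEnds M).incidenceSet v).ncard ≤ 2 := by
  have hDfin : ((G.deleteEdges M).incidenceSet v).Finite :=
    hfin.subset ((incidenceSet_subset _ v).trans (edgeSet_mono (deleteEdges_le _)))
  have hQ : ∀ f ∈ (G.joinPathEnds M).incidenceSet v, f ∉ M →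
      f ∈ (G.deleteEdges M).incidenceSet v := fun f hf hfM => by
      rw [incidenceSet_deleteEdges]
      exact ⟨⟨edgeSet_mono joinPathEnds_le hf.1, hf.2⟩, hfM⟩
  by_cases h : ∃ e ∈ (G.joinPathEnds M).incidenceSet v, e ∈ M
  · obtain ⟨e, he, heM⟩ := h
    have hsub : ((G.deleteEdges M).incidenceSet v).Subsingleton := by
      have := he.1
      rw [joinPathEnds, edgeSet_deleteEdges] at this
      by_contra hns
      exact this.2 ⟨heM, v, he.2, hns⟩
    have : (G.joinPathEnds M).incidenceSet v ⊆ insert e ((G.deleteEdges M).incidenceSet v) := by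
      intro f hf
      by_cases hfM : f ∈ M
      · exact Or.inl (hM v ⟨hfM, edgeSet_mono joinPathEnds_le hf.1, hf.2⟩
          ⟨heM, edgeSet_mono joinPathEnds_le he.1, he.2⟩)
      · exact Or.inr (hQ f hf hfM)
    calc _ ≤ (insert e ((G.deleteEdges M).incidenceSet v)).ncard :=
          Set.ncard_le_ncard this (hDfin.insert e)
      _ ≤ ((G.deleteEdges M).incidenceSet v).ncard + 1 := Set.ncard_insert_le _ _
      _ ≤ 2 := by
          have := hDfin.to_subtype
          have := Set.ncard_le_one_iff_subsingleton.2 hsub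
          omega
  · push Not at h
    exact (Set.ncard_le_ncard (fun f hf => hQ f hf (h f hf)) hDfin).trans (hD v)

end SimpleGraph

def OnlyColorTwoAt (G : SimpleGraph V) (M : Set (Sym2 V)) (c : Sym2 V → ℕ) (x : V) : Prop :=
  ((G.deleteEdges M).incidenceSet x).Nonempty ∧ ∀ e ∈ (G.deleteEdges M).incidenceSet x, c e = 2

open Classical in
/-- An edge of `M` is put above the colors `2, 3` of `G - M` exactly when one of its ends would
otherwise see the colors `1, 3` only. -/
noncomputable def hansenColoring (G : SimpleGraph V) (M : Set (Sym2 V)) (c : Sym2 V → ℕ)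
    (e : Sym2 V) : ℕ :=
  if e ∈ M then (if ∃ x ∈ e, OnlyColorTwoAt G M c x then 4 else 1) else c e + 1

theorem hansenColoring_cases (hcmaps : Set.MapsTo c (G.joinPathEnds M).edgeSet (Set.Icc 1 2))
    {e : Sym2 V} (he : e ∈ G.edgeSet) :
    (e ∈ M ∧ ¬(∃ x ∈ e, OnlyColorTwoAt G M c x) ∧ hansenColoring G M c e = 1) ∨
      (e ∈ M ∧ (∃ x ∈ e, OnlyColorTwoAt G M c x) ∧ hansenColoring G M c e = 4) ∨
      (e ∉ M ∧ c e = 1 ∧ hansenColoring G M c e = 2) ∨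
      (e ∉ M ∧ c e = 2 ∧ hansenColoring G M c e = 3) := by
  unfold hansenColoring
  by_cases heM : e ∈ M
  · by_cases hx : ∃ x ∈ e, OnlyColorTwoAt G M c x <;> simp [heM, hx]
  · have := hcmaps (mem_edgeSet_joinPathEnds_of_notMem he heM)
    simp only [Set.mem_Icc] at this
    simp only [heM, if_false, false_and, not_false_eq_true, true_and, false_or]
    omega

theorem isProperEdgeColoring_hansenColoring (hM : ∀ v, (M ∩ G.incidenceSet v).Subsingleton)
    (hc : IsProperEdgeColoring (G.joinPathEnds M) c)
    (hcmaps : Set.MapsTo c (G.joinPathEnds M).edgeSet (Set.Icc 1 2)) :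
    IsProperEdgeColoring G (hansenColoring G M c) := by
  intro e he f hf hne ⟨x, hxe, hxf⟩
  by_cases hboth : e ∈ M ∧ f ∈ M
  · exact absurd (hM x ⟨hboth.1, he, hxe⟩ ⟨hboth.2, hf, hxf⟩) hne
  by_cases hnone : e ∉ M ∧ f ∉ M
  · have := hc e (mem_edgeSet_joinPathEnds_of_notMem he hnone.1) f
      (mem_edgeSet_joinPathEnds_of_notMem hf hnone.2) hne ⟨x, hxe, hxf⟩
    rw [hansenColoring, hansenColoring, if_neg hnone.1, if_neg hnone.2]
    omega
  rcases hansenColoring_cases hcmaps he with h | h | h | h <;>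
    rcases hansenColoring_cases hcmaps hf with h' | h' | h' | h' <;>
    first | omega | tauto

theorem two_mem_colorsAt_hansenColoring
    (hcmaps : Set.MapsTo c (G.joinPathEnds M).edgeSet (Set.Icc 1 2)) {v : V}
    (h1 : 1 ∈ colorsAt G (hansenColoring G M c) v)
    (h3 : 3 ∈ colorsAt G (hansenColoring G M c) v) : 2 ∈ colorsAt G (hansenColoring G M c) v := by
  rw [colorsAt_eq_image] at *
  obtain ⟨e, he, he1⟩ := h1
  obtain ⟨f, hf, hf3⟩ := h3
  obtain ⟨-, hev, -⟩ : e ∈ M ∧ ¬(∃ x ∈ e, OnlyColorTwoAt G M c x) ∧ _ := by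
    rcases hansenColoring_cases hcmaps he.1 with h | h | h | h <;> first | exact h | omega
  obtain ⟨hfM, -, -⟩ : f ∉ M ∧ c f = 2 ∧ _ := by
    rcases hansenColoring_cases hcmaps hf.1 with h | h | h | h <;> first | exact h | omega
  have hfD : f ∈ (G.deleteEdges M).incidenceSet v := by
    rw [incidenceSet_deleteEdges]
    exact ⟨hf, hfM⟩
  obtain ⟨g, hg, hcg⟩ : ∃ g ∈ (G.deleteEdges M).incidenceSet v, c g ≠ 2 := by
    by_contra! h
    exact hev ⟨v, he.2, ⟨f, hfD⟩, h⟩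
  rw [incidenceSet_deleteEdges] at hg
  refine ⟨g, hg.1, ?_⟩
  rcases hansenColoring_cases hcmaps hg.1.1 with h | h | h | h
  exacts [absurd h.1 hg.2, absurd h.1 hg.2, h.2.2, absurd h.2.1 hcg]

theorem three_mem_colorsAt_hansenColoring (hc : IsProperEdgeColoring (G.joinPathEnds M) c)
    (hcmaps : Set.MapsTo c (G.joinPathEnds M).edgeSet (Set.Icc 1 2)) {v : V}
    (h2 : 2 ∈ colorsAt G (hansenColoring G M c) v)
    (h4 : 4 ∈ colorsAt G (hansenColoring G M c) v) : 3 ∈ colorsAt G (hansenColoring G M c) v := by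
  rw [colorsAt_eq_image] at *
  obtain ⟨f, hf, hf2⟩ := h2
  obtain ⟨e, he, he4⟩ := h4
  obtain ⟨hfM, hcf, -⟩ : f ∉ M ∧ c f = 1 ∧ _ := by
    rcases hansenColoring_cases hcmaps hf.1 with h | h | h | h <;> first | exact h | omega
  obtain ⟨heM, ⟨z, hze, hz⟩, -⟩ : e ∈ M ∧ (∃ x ∈ e, OnlyColorTwoAt G M c x) ∧ _ := by
    rcases hansenColoring_cases hcmaps he.1 with h | h | h | h <;> first | exact h | omega
  by_contra h3
  have hDQ := incidenceSet_deleteEdges_subset_joinPathEnds (G := G) (M := M)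
  have hsub_of_const {x : V} {t : ℕ} (h : ∀ g ∈ (G.deleteEdges M).incidenceSet x, c g = t) :
      ((G.deleteEdges M).incidenceSet x).Subsingleton := fun g hg g' hg' =>
    (hc.injOn x).mono (hDQ x) hg hg' ((h g hg).trans (h g' hg').symm)
  have hfD : f ∈ (G.deleteEdges M).incidenceSet v := by
    rw [incidenceSet_deleteEdges]
    exact ⟨hf, hfM⟩
  have hv1 : ∀ g ∈ (G.deleteEdges M).incidenceSet v, c g = 1 := by
    intro g hg
    rw [incidenceSet_deleteEdges] at hg
    rcases hansenColoring_cases hcmaps hg.1.1 with h | h | h | h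
    exacts [absurd h.1 hg.2, absurd h.1 hg.2, h.2.1, absurd ⟨g, hg.1, h.2.2⟩ h3]
  have hzv : z ≠ v := by
    rintro rfl
    have := hz.2 f hfD
    omega
  obtain rfl : e = s(v, z) := (Sym2.mem_and_mem_iff hzv.symm).1 ⟨he.2, hze⟩
  have heQ : s(v, z) ∈ (G.joinPathEnds M).edgeSet :=
    mem_edgeSet_joinPathEnds_of_subsingleton he.1 fun x hx => by
      rcases Sym2.mem_iff.1 hx with rfl | rfl
      exacts [hsub_of_const hv1, hsub_of_const hz.2]
  obtain ⟨g, hg⟩ := hz.1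
  have hne_f : c s(v, z) ≠ c f := (hc.injOn v).ne ⟨heQ, he.2⟩ (hDQ v hfD)
    (fun h => hfM (h ▸ heM))
  have hne_g : c s(v, z) ≠ c g := (hc.injOn z).ne ⟨heQ, hze⟩ (hDQ z hg)
    (fun h => (incidenceSet_deleteEdges G M z ▸ hg).2 (h ▸ heM))
  have hbounds := hcmaps heQ
  have := hz.2 g hg
  simp only [Set.mem_Icc] at hbounds
  omega

theorem isIntervalColoring_hansenColoring (hM : ∀ v, (M ∩ G.incidenceSet v).Subsingleton)
    (hc : IsProperEdgeColoring (G.joinPathEnds M) c)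
    (hcmaps : Set.MapsTo c (G.joinPathEnds M).edgeSet (Set.Icc 1 2)) :
    IsIntervalColoring G (hansenColoring G M c) := by
  refine isIntervalColoring_iff.2 ⟨isProperEdgeColoring_hansenColoring hM hc hcmaps,
    fun e he => ?_, fun v => .of_subset_Icc_one_four ?_ ?_ (two_mem_colorsAt_hansenColoring hcmaps)
      (three_mem_colorsAt_hansenColoring hc hcmaps)⟩
  · rcases hansenColoring_cases hcmaps he with h | h | h | h <;> omega
  · rw [colorsAt_eq_image]
    rintro _ ⟨e, he, rfl⟩
    rcases hansenColoring_cases hcmaps he.1 with h | h | h | h <;> simp [h.2.2]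
  · rw [colorsAt_eq_image]
    rintro ⟨⟨e, he, he1⟩, ⟨f, hf, hf4⟩⟩
    have heM : e ∈ M := by
      rcases hansenColoring_cases hcmaps he.1 with h | h | h | h <;> first | exact h.1 | omega
    have hfM : f ∈ M := by
      rcases hansenColoring_cases hcmaps hf.1 with h | h | h | h <;> first | exact h.1 | omega
    rw [hM v ⟨heM, he⟩ ⟨hfM, hf⟩, hf4] at he1
    omega

/-- Hansen's theorem. Take for `M` the third color class of a König coloring with colors
`1, 2, 3`. -/
theorem intervalColorable_of_ncard_incidenceSet_le_three (hG : G.Colorable 2)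
    (hfin : G.edgeSet.Finite) (hdeg : ∀ v, (G.incidenceSet v).ncard ≤ 3) : IntervalColorable G := by
  obtain ⟨c₃, hc₃, hc₃maps⟩ := exists_isProperEdgeColoring_Icc hG hfin hdeg
  set M := {e | c₃ e = 3}
  have hM (v : V) : (M ∩ G.incidenceSet v).Subsingleton := fun e he f hf =>
    hc₃.injOn v he.2 hf.2 (he.1.trans hf.1.symm)
  have hD (v : V) : ((G.deleteEdges M).incidenceSet v).ncard ≤ 2 := by
    have hsub : (G.deleteEdges M).incidenceSet v ⊆ G.incidenceSet v := by
      rw [incidenceSet_deleteEdges]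
      exact Set.sdiff_subset
    rw [← ((hc₃.injOn v).mono hsub).ncard_image]
    refine (Set.ncard_le_ncard (t := Set.Icc 1 2) ?_ (Set.finite_Icc 1 2)).trans (by simp)
    rintro _ ⟨e, he, rfl⟩
    rw [incidenceSet_deleteEdges] at he
    have := hc₃maps he.1.1
    have hne : c₃ e ≠ 3 := he.2
    simp only [Set.mem_Icc] at this ⊢
    omega
  obtain ⟨c, hc, hcmaps⟩ := exists_isProperEdgeColoring_Icc (hG.mono_left joinPathEnds_le)
    (hfin.subset (edgeSet_mono joinPathEnds_le)) (ncard_incidenceSet_joinPathEnds_le_two hfin hM hD)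
  exact ⟨_, isIntervalColoring_hansenColoring hM hc hcmaps⟩

namespace SimpleGraph

theorem ncard_neighborSet_eq_ncard_incidenceSet (v : V) :
    (G.neighborSet v).ncard = (G.incidenceSet v).ncard := by
  classical
  exact (Set.ncard_congr' (G.incidenceSetEquivNeighborSet v)).symm

theorem ncard_incidenceSet_eq_degree [Fintype V] [DecidableRel G.Adj] (v : V) :
    (G.incidenceSet v).ncard = G.degree v := by
  classical
  rw [← Nat.card_coe_set_eq, Nat.card_eq_fintype_card, card_incidenceSet_eq_degree]

theorem ncard_neighborSet_colorSubgraph_singleton (t : ℕ) (v : V) :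
    ((G.colorSubgraph c {t}).neighborSet v).ncard = {e ∈ G.incidenceSet v | c e = t}.ncard := by
  rw [ncard_neighborSet_eq_ncard_incidenceSet]
  congr 1
  ext e
  simp

theorem existsUnique_mem_edgeSet_colorSubgraph {k : ℕ} (hc : Set.MapsTo c G.edgeSet (Set.Icc 1 k))
    {e : Sym2 V} (he : e ∈ G.edgeSet) :
    ∃! i : Fin k, e ∈ (G.colorSubgraph c {(i : ℕ) + 1}).edgeSet := by
  have := hc he
  simp only [Set.mem_Icc] at this
  refine ⟨⟨c e - 1, by omega⟩, by simp [he]; omega, fun j hj => Fin.ext ?_⟩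
  simp only [mem_edgeSet_colorSubgraph, Set.mem_singleton_iff] at hj
  simp only
  omega

end SimpleGraph

/-- The color classes of an equitable coloring with `k` colors. -/
theorem exists_balanced_intervalDecomposition {k : ℕ} (hG : G.Colorable 2)
    (hfin : G.edgeSet.Finite) (hk : 0 < k) (hdeg : ∀ v, (G.incidenceSet v).ncard ≤ 3 * k) :
    ∃ H : Fin k → SimpleGraph V, (∀ i, H i ≤ G) ∧ (∀ i, IntervalColorable (H i)) ∧
      (∀ e ∈ G.edgeSet, ∃! i, e ∈ (H i).edgeSet) ∧
      ∀ v (i j : Fin k), ((H i).neighborSet v).ncard ≤ ((H j).neighborSet v).ncard + 1 := by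
  obtain ⟨c, hmaps, hbal⟩ := exists_equitable_edgeColoring hG hfin hk
  have hbal' (i : Fin k) (v : V) := hbal v (i + 1) ⟨by omega, by omega⟩
  have hceil (v : V) :
      ((G.incidenceSet v).ncard + k - 1) / k ≤ (G.incidenceSet v).ncard / k + 1 := by
    rw [← Nat.add_div_right _ hk]
    exact Nat.div_le_div_right (by omega)
  refine ⟨fun i => G.colorSubgraph c {(i : ℕ) + 1}, fun _ => colorSubgraph_le, fun i => ?_,
    fun e he => existsUnique_mem_edgeSet_colorSubgraph hmaps he, fun v i j => ?_⟩
  · refine intervalColorable_of_ncard_incidenceSet_le_three (hG.mono_left colorSubgraph_le)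
      (hfin.subset (edgeSet_mono colorSubgraph_le)) fun v => ?_
    rw [← ncard_neighborSet_eq_ncard_incidenceSet, ncard_neighborSet_colorSubgraph_singleton]
    have := (hbal' i v).2
    have := (Nat.div_lt_iff_lt_mul hk).2
      (show (G.incidenceSet v).ncard + k - 1 < 4 * k by have := hdeg v; omega)
    omega
  · simp only [ncard_neighborSet_colorSubgraph_singleton]
    have := (hbal' i v).2
    have := (hbal' j v).1
    have := hceil v
    omega

theorem bipartite_intervalThickness_le_ceil_maxDegree_div_three_general [Fintype V]
    (G : SimpleGraph V) [DecidableRel G.Adj]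
    (hbip : G.Colorable 2) (hdelta : 4 ≤ G.maxDegree) :
    intervalThickness G ≤ (G.maxDegree + 2) / 3 ∧
      ∃ H : Fin ((G.maxDegree + 2) / 3) → SimpleGraph V,
        (∀ i, H i ≤ G) ∧ (∀ i, IntervalColorable (H i)) ∧
        (∀ e ∈ G.edgeSet, ∃! i, e ∈ (H i).edgeSet) ∧
        ∀ v (i j : Fin ((G.maxDegree + 2) / 3)),
          ((H i).neighborSet v).ncard ≤ ((H j).neighborSet v).ncard + 1 := by
  have hdeg (v : V) : (G.incidenceSet v).ncard ≤ 3 * ((G.maxDegree + 2) / 3) := by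
    rw [ncard_incidenceSet_eq_degree]
    have := G.degree_le_maxDegree v
    omega
  obtain ⟨H, hle, hIC, hdecomp, hbal⟩ :=
    exists_balanced_intervalDecomposition hbip (Set.toFinite _) (by omega) hdeg
  exact ⟨Nat.sInf_le ⟨H, hle, hIC, hdecomp⟩, H, hle, hIC, hdecomp, hbal⟩

theorem bipartite_intervalThickness_le_ceil_maxDegree_div_three [Fintype V] [DecidableEq V]
    (G : SimpleGraph V) [DecidableRel G.Adj]
    (hbip : G.Colorable 2) (hdelta : 4 ≤ G.maxDegree) :
    intervalThickness G ≤ (G.maxDegree + 2) / 3 ∧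
      ∃ H : Fin ((G.maxDegree + 2) / 3) → SimpleGraph V,
        (∀ i, H i ≤ G) ∧ (∀ i, IntervalColorable (H i)) ∧
        (∀ e ∈ G.edgeSet, ∃! i, e ∈ (H i).edgeSet) ∧
        ∀ v (i j : Fin ((G.maxDegree + 2) / 3)),
          ((H i).neighborSet v).ncard ≤ ((H j).neighborSet v).ncard + 1 :=
  bipartite_intervalThickness_le_ceil_maxDegree_div_three_general G hbip hdelta
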